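/- arXiv:1009.4070 — 2 statements merged into one kernel-verified Lean document; each statement's English description precedes it below -/
import Mathlib

section
/- Let (S, 𝒮) be a complete separable metric space and {σ_n} a sequence of random probability measures on S. If σ is a (deterministic) probability measure on S such that for every Borel set B with σ(∂B) = 0 one has σ_n(B) → σ(B) almost surely, then almost surely σ_n converges weakly to σ. -/
open MeasureTheory ProbabilityTheory Filter Topology

/-- In any interval one can find a radius whose ball has null frontier. -/
lemma exists_null_frontier_ball' {S : Type*} [MetricSpace S] [MeasurableSpace S]
    [OpensMeasurableSpace S] (μ : Measure S) [IsFiniteMeasure μ] (x : S) {a b : ℝ}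
    (hab : a < b) : ∃ r ∈ Set.Ioo a b, μ (frontier (Metric.ball x r)) = 0 := by
  have mbles : ∀ r : ℝ, MeasurableSet (Metric.sphere x r) :=
    fun r ↦ Metric.isClosed_sphere.measurableSet
  have disjs : Pairwise (Function.onFun Disjoint (fun r : ℝ => Metric.sphere x r)) := by
    intro r r' hrr'
    rw [Function.onFun, Set.disjoint_left]
    intro y hy hy'
    exact hrr' ((Metric.mem_sphere.mp hy).symm.trans (Metric.mem_sphere.mp hy'))
  have key := Measure.countable_meas_pos_of_disjoint_iUnion (μ := μ) mbles disjs
  have aux := measure_diff_null (s := Set.Ioo a b) (Set.Countable.measure_zero key volume)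
  have len_pos : 0 < ENNReal.ofReal (b - a) := by
    simp only [hab, ENNReal.ofReal_pos, sub_pos]
  rw [← Real.volume_Ioo, ← aux] at len_pos
  rcases MeasureTheory.nonempty_of_measure_ne_zero len_pos.ne.symm with ⟨r, ⟨r_in_Ioo, hr⟩⟩
  refine ⟨r, r_in_Ioo, ?_⟩
  have : μ (Metric.sphere x r) = 0 := by
    simpa only [Set.mem_setOf_eq, not_lt, le_zero_iff] using hr
  exact measure_mono_null Metric.frontier_ball_subset_sphere this

lemma frontier_finset_biUnion_subset {α ι : Type*} [TopologicalSpace α] (t : Finset ι)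
    (f : ι → Set α) : frontier (⋃ i ∈ t, f i) ⊆ ⋃ i ∈ t, frontier (f i) := by
  classical
  induction t using Finset.induction_on with
  | empty => simp
  | insert a s hi ih =>
      simp only [Finset.set_biUnion_insert]
      exact (frontier_union_subset _ _).trans
        (Set.union_subset_union Set.inter_subset_left (Set.inter_subset_right.trans ih))

/-- If random probability measures on a Polish space converge almost surely set-wise on
every continuity set of a probability measure `σ`, then they converge weakly to `σ`
almost surely. -/
theorem as_setwise_implies_as_weak_convergence
    {Ω : Type*} [MeasureSpace Ω] [IsProbabilityMeasure (ℙ : Measure Ω)]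
    {S : Type*} [MetricSpace S] [CompleteSpace S] [TopologicalSpace.SeparableSpace S]
    [MeasurableSpace S] [BorelSpace S]
    (σn : ℕ → Ω → ProbabilityMeasure S) (σ : ProbabilityMeasure S)
    (h : ∀ B : Set S, MeasurableSet B → (σ : Measure S) (frontier B) = 0 →
      ∀ᵐ ω ∂ℙ, Tendsto (fun n => σn n ω B) atTop (nhds (σ B))) :
    ∀ᵐ ω ∂ℙ, Tendsto (fun n => σn n ω) atTop (nhds σ) := by
  classical
  have : Nonempty S := σ.nonempty
  set d : ℕ → S := TopologicalSpace.denseSeq S with hd_def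
  have hd : DenseRange d := TopologicalSpace.denseRange_denseSeq S
  -- choose radii with null frontier
  have hex : ∀ p : ℕ × ℚ, ∃ r : ℝ, (0 < p.2 → r ∈ Set.Ioo (p.2 : ℝ) (2 * p.2)) ∧
      (σ : Measure S) (frontier (Metric.ball (d p.1) r)) = 0 := by
    intro p
    by_cases hq : 0 < p.2
    · have hq' : (p.2 : ℝ) < 2 * p.2 := by
        have : (0 : ℝ) < p.2 := by exact_mod_cast hq
        linarith
      obtain ⟨r, hr, hr0⟩ := exists_null_frontier_ball' (σ : Measure S) (d p.1) hq'
      exact ⟨r, fun _ => hr, hr0⟩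
    · refine ⟨0, fun hc => absurd hc hq, ?_⟩
      simp [Metric.ball_zero]
  choose rr hrr1 hrr2 using hex
  set P : ℕ × ℚ → Set S := fun p => Metric.ball (d p.1) (rr p) with hP_def
  set U : Finset (ℕ × ℚ) → Set S := fun t => ⋃ p ∈ t, P p with hU_def
  have hUmble : ∀ t, MeasurableSet (U t) :=
    fun t => t.measurableSet_biUnion (fun p _ => measurableSet_ball)
  have hUnull : ∀ t, (σ : Measure S) (frontier (U t)) = 0 := by
    intro t
    refine measure_mono_null (frontier_finset_biUnion_subset t P) ?_
    refine (measure_biUnion_null_iff t.countable_toSet).mpr ?_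
    intro p _
    exact hrr2 p
  have H : ∀ᵐ ω ∂ℙ, ∀ t : Finset (ℕ × ℚ),
      Tendsto (fun n => σn n ω (U t)) atTop (nhds (σ (U t))) :=
    ae_all_iff.mpr (fun t => h (U t) (hUmble t) (hUnull t))
  filter_upwards [H] with ω hω
  apply MeasureTheory.tendsto_of_forall_isOpen_le_liminf
  intro G hG
  -- First prove the ENNReal version.
  have key : (σ : Measure S) G ≤ atTop.liminf (fun n => (σn n ω : Measure S) G) := by
    -- cover claim
    have cover : ∀ x ∈ G, ∃ p : ℕ × ℚ, x ∈ P p ∧ P p ⊆ G := by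
      intro x hx
      obtain ⟨ε, hε, hball⟩ := Metric.isOpen_iff.mp hG x hx
      obtain ⟨q, hq0, hq4⟩ := exists_rat_btwn (show (0 : ℝ) < ε / 4 by linarith)
      have hq0' : 0 < q := by exact_mod_cast hq0
      obtain ⟨n, hn⟩ := hd.exists_dist_lt x (show (0:ℝ) < q by exact_mod_cast hq0)
      have hr := hrr1 (n, q) hq0'
      refine ⟨(n, q), ?_, ?_⟩
      · exact Metric.mem_ball.mpr (lt_trans hn hr.1)
      · intro y hy
        apply hball
        rw [Metric.mem_ball] at hy ⊢
        have h1 : dist y x ≤ dist y (d n) + dist (d n) x := dist_triangle _ _ _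
        have h2 : dist (d n) x = dist x (d n) := dist_comm _ _
        have : (q : ℝ) < ε / 4 := hq4
        have hr2 : rr (n, q) < 2 * q := hr.2
        calc dist y x ≤ dist y (d n) + dist (d n) x := h1
          _ < 2 * q + q := by rw [h2]; exact add_lt_add (lt_trans hy hr2) hn
          _ < ε := by linarith
    -- directed union
    let ι := {t : Finset (ℕ × ℚ) // U t ⊆ G}
    have hdir : Directed (· ⊆ ·) (fun i : ι => U i.1) := by
      intro i j
      refine ⟨⟨i.1 ∪ j.1, ?_⟩, ?_, ?_⟩
      · simp only [hU_def, Finset.set_biUnion_union]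
        exact Set.union_subset i.2 j.2
      · simp only [hU_def, Finset.set_biUnion_union]
        exact Set.subset_union_left
      · simp only [hU_def, Finset.set_biUnion_union]
        exact Set.subset_union_right
    have hcover : G = ⋃ i : ι, U i.1 := by
      apply Set.Subset.antisymm
      · intro x hx
        obtain ⟨p, hxp, hpG⟩ := cover x hx
        have hUp : U {p} = P p := Finset.set_biUnion_singleton p P
        exact Set.mem_iUnion.mpr ⟨⟨{p}, by rw [hUp]; exact hpG⟩, by
          show x ∈ U {p}; rw [hUp]; exact hxp⟩
      · exact Set.iUnion_subset (fun i => i.2)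
    have hsup := Directed.measure_iUnion (μ := (σ : Measure S)) hdir
    rw [← hcover] at hsup
    rw [hsup]
    refine iSup_le (fun i => ?_)
    have hten : Tendsto (fun n => (σn n ω : Measure S) (U i.1)) atTop
        (nhds ((σ : Measure S) (U i.1))) := by
      have := (ENNReal.continuous_coe.continuousAt).tendsto.comp (hω i.1)
      simpa only [Function.comp_def, ProbabilityMeasure.ennreal_coeFn_eq_coeFn_toMeasure]
        using this
    calc (σ : Measure S) (U i.1)
        = atTop.liminf (fun n => (σn n ω : Measure S) (U i.1)) := hten.liminf_eq.symm
      _ ≤ atTop.liminf (fun n => (σn n ω : Measure S) G) :=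
          liminf_le_liminf (Eventually.of_forall (fun n => measure_mono i.2))
  -- Convert to NNReal.
  have bdd : ∀ n, σn n ω G ≤ 1 := fun n => ProbabilityMeasure.apply_le_one _ _
  have aux : (ENNReal.ofNNReal (atTop.liminf (fun n => σn n ω G))) =
      atTop.liminf (fun n => (ENNReal.ofNNReal (σn n ω G))) := by
    refine Monotone.map_liminf_of_continuousAt (F := atTop) ENNReal.coe_mono
      (fun n => σn n ω G) ENNReal.continuous_coe.continuousAt ?_ ?_
    · exact IsBoundedUnder.isCoboundedUnder_ge ⟨1, Eventually.of_forall bdd |>.mono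
        (fun n hn => hn)⟩
    · exact ⟨0, Eventually.of_forall (fun n => zero_le)⟩
  rw [← ENNReal.coe_le_coe, aux]
  simpa only [ProbabilityMeasure.ennreal_coeFn_eq_coeFn_toMeasure] using key
end

section
/- Let ξ, ξ_1, ξ_2, … be i.i.d. R^d-valued random vectors with ξ ∈ RV(α, σ). For a group of m samples, let ξ_{m} be the sample vector with largest norm and θ_m = ξ_m/‖ξ_m‖. Then θ_m converges in distribution, as m → ∞, to the normalized spectral measure σ̃ = σ/σ(S); in particular P{θ_m ∈ B} → σ(B)/σ(S) for every σ-continuity set B ⊂ S^{d−1}. -/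
open MeasureTheory ProbabilityTheory Filter Topology


/-- If `0 ≤ aₘ ≤ 1` and `m · aₘ → L`, then `(1 - aₘ)^(m-1) → exp (-L)`. -/
lemma pow_one_sub_tendsto_exp (a : ℕ → ℝ) (L : ℝ)
    (h01 : ∀ m, 0 ≤ a m ∧ a m ≤ 1)
    (hL : Tendsto (fun m : ℕ => (m : ℝ) * a m) atTop (nhds L)) :
    Tendsto (fun m : ℕ => (1 - a m) ^ (m - 1)) atTop (nhds (Real.exp (-L))) := by
  have ha0 : Tendsto a atTop (nhds 0) := by
    have h := hL.mul (tendsto_one_div_atTop_nhds_zero_nat)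
    have : (fun m : ℕ => ((m : ℝ) * a m) * (1 / m)) =ᶠ[atTop] a := by
      filter_upwards [eventually_gt_atTop 0] with m hm
      have : (m : ℝ) ≠ 0 := Nat.cast_ne_zero.2 hm.ne'
      field_simp
    rw [mul_zero] at h
    exact h.congr' this
  have hhalf : ∀ᶠ m in atTop, a m ≤ 1 / 2 :=
    ha0.eventually (eventually_le_nhds (by norm_num))
  -- limits of exponents
  have hma : Tendsto (fun m : ℕ => ((m : ℝ) - 1) * a m) atTop (nhds L) := by
    have := hL.sub ha0
    simpa [sub_mul] using this
  have hlow : Tendsto (fun m : ℕ => Real.exp (-(((m : ℝ) - 1) * (a m / (1 - a m)))))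
      atTop (nhds (Real.exp (-L))) := by
    apply Real.continuous_exp.continuousAt.tendsto.comp
    apply Tendsto.neg
    have h1 : Tendsto (fun m : ℕ => (1 - a m)) atTop (nhds 1) := by
      simpa using (tendsto_const_nhds (x := (1:ℝ))).sub ha0
    have := (hma.div h1 (by norm_num))
    simp only [div_one] at this
    apply this.congr
    intro m; simp only [Pi.div_apply]; ring
  have hup : Tendsto (fun m : ℕ => Real.exp (-(((m : ℝ) - 1) * a m)))
      atTop (nhds (Real.exp (-L))) :=
    Real.continuous_exp.continuousAt.tendsto.comp hma.neg
  apply tendsto_of_tendsto_of_tendsto_of_le_of_le' hlow hup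
  · filter_upwards [hhalf, eventually_ge_atTop 1] with m hm hm1
    have h0 : 0 ≤ a m := (h01 m).1
    have h1 : 1 - a m > 0 := by linarith
    have key : Real.exp (-(a m / (1 - a m))) ≤ 1 - a m := by
      have ht : 0 ≤ a m / (1 - a m) := div_nonneg h0 h1.le
      have := Real.add_one_le_exp (a m / (1 - a m))
      rw [Real.exp_neg]
      rw [inv_le_comm₀ (Real.exp_pos _) h1]
      calc (1 - a m)⁻¹ = 1 + a m / (1 - a m) := by field_simp; ring
        _ ≤ Real.exp (a m / (1 - a m)) := by linarith
    calc Real.exp (-(((m : ℝ) - 1) * (a m / (1 - a m))))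
        = Real.exp (-(a m / (1 - a m))) ^ (m - 1) := by
          rw [← Real.exp_nat_mul]
          congr 1
          have : ((m - 1 : ℕ) : ℝ) = (m : ℝ) - 1 := by
            rw [Nat.cast_sub hm1]; norm_num
          rw [this]; ring
      _ ≤ (1 - a m) ^ (m - 1) := by
          apply pow_le_pow_left₀ (Real.exp_pos _).le key
  · filter_upwards [hhalf, eventually_ge_atTop 1] with m hm hm1
    have h0 : 0 ≤ a m := (h01 m).1
    have key : 1 - a m ≤ Real.exp (-(a m)) := by
      have := Real.add_one_le_exp (-(a m)); linarith
    calc (1 - a m) ^ (m - 1) ≤ Real.exp (-(a m)) ^ (m - 1) :=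
          pow_le_pow_left₀ (by linarith) key _
      _ = Real.exp (-(((m : ℝ) - 1) * a m)) := by
          rw [← Real.exp_nat_mul]
          congr 1
          have : ((m - 1 : ℕ) : ℝ) = (m : ℝ) - 1 := by
            rw [Nat.cast_sub hm1]; norm_num
          rw [this]; ring


/-- Elementary step inequality. -/
lemma step_ineq (a b : ℝ) (hba : b ≤ a) :
    ((b+1) * Real.exp (-b) - (a+1) * Real.exp (-a)) - (a - b) * (Real.exp (-b) - Real.exp (-a))
      ≤ b * (Real.exp (-b) - Real.exp (-a)) := by
  have ea : Real.exp (-a) = Real.exp (b - a) * Real.exp (-b) := by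
    rw [← Real.exp_add]; ring_nf
  have h := Real.add_one_le_exp (b - a)
  nlinarith [Real.exp_pos (-b), mul_le_mul_of_nonneg_right h (Real.exp_pos (-b)).le]

/-- Riemann-sum lower bound. -/
lemma sum_lower (δ h : ℝ) (hδ : 0 < δ) (hh : 0 ≤ h) (N : ℕ) :
    (1 + δ) * Real.exp (-δ) - (1 + (δ + N * h)) * Real.exp (-(δ + N * h)) - h
      ≤ ∑ i ∈ Finset.range N,
          (δ + ((N : ℝ) - (i+1)) * h) *
            (Real.exp (-(δ + ((N : ℝ) - (i+1)) * h)) - Real.exp (-(δ + ((N : ℝ) - i) * h))) := by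
  set u : ℕ → ℝ := fun i => δ + ((N : ℝ) - i) * h with hu
  have hstep : ∀ i ∈ Finset.range N,
      ((u (i+1) + 1) * Real.exp (-(u (i+1))) - (u i + 1) * Real.exp (-(u i)))
        - h * (Real.exp (-(u (i+1))) - Real.exp (-(u i)))
        ≤ u (i+1) * (Real.exp (-(u (i+1))) - Real.exp (-(u i))) := by
    intro i _
    have hba : u (i+1) ≤ u i := by
      simp only [hu]; push_cast; nlinarith
    have hdiff : u i - u (i+1) = h := by simp only [hu]; push_cast; ring
    have := step_ineq (u i) (u (i+1)) hba
    rw [hdiff] at this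
    linarith
  have hsum := Finset.sum_le_sum hstep
  have htel : ∑ i ∈ Finset.range N,
      (((u (i+1) + 1) * Real.exp (-(u (i+1))) - (u i + 1) * Real.exp (-(u i)))
        - h * (Real.exp (-(u (i+1))) - Real.exp (-(u i))))
      = ((u N + 1) * Real.exp (-(u N)) - (u 0 + 1) * Real.exp (-(u 0)))
        - h * (Real.exp (-(u N)) - Real.exp (-(u 0))) := by
    rw [Finset.sum_sub_distrib, ← Finset.mul_sum]
    rw [Finset.sum_range_sub (fun i => (u i + 1) * Real.exp (-(u i)))]
    rw [Finset.sum_range_sub (fun i => Real.exp (-(u i)))]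
  rw [htel] at hsum
  have huN : u N = δ := by simp [hu]
  have hu0 : u 0 = δ + N * h := by simp [hu]
  rw [huN, hu0] at hsum
  have hexp : Real.exp (-δ) - Real.exp (-(δ + N * h)) ≤ 1 := by
    have h1 : Real.exp (-δ) ≤ 1 := Real.exp_le_one_iff.2 (by linarith)
    have h2 : 0 < Real.exp (-(δ + N * h)) := Real.exp_pos _
    linarith
  have hrhs : ∑ i ∈ Finset.range N, u (i+1) * (Real.exp (-(u (i+1))) - Real.exp (-(u i)))
      = ∑ i ∈ Finset.range N, (δ + ((N : ℝ) - (i+1)) * h) *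
          (Real.exp (-(δ + ((N : ℝ) - (i+1)) * h)) - Real.exp (-(δ + ((N : ℝ) - i) * h))) := by
    apply Finset.sum_congr rfl
    intro i _; simp only [hu]; push_cast; ring_nf
  rw [hrhs] at hsum
  have hmul : 0 ≤ h := hh
  nlinarith [hsum]


lemma choose_params (η : ℝ) (hη : 0 < η) : ∃ δ U : ℝ, ∃ N : ℕ, 0 < δ ∧ 0 < N ∧ δ ≤ U ∧
    1 - η ≤ (1 + δ) * Real.exp (-δ) - (1 + U) * Real.exp (-U) - (U - δ) / N := by
  refine ⟨min (η/3) 1, max 1 (24/η), ⌈(max 1 (24/η) - min (η/3) 1) * 3 / η⌉₊ + 1, ?_, ?_, ?_, ?_⟩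
  · positivity
  · positivity
  · exact le_trans (min_le_right _ _) (le_max_left _ _)
  set δ := min (η/3) 1 with hδdef
  set U := max 1 (24/η) with hUdef
  set N : ℕ := ⌈(U - δ) * 3 / η⌉₊ + 1 with hNdef
  have hδpos : 0 < δ := by positivity
  have hδ1 : δ ≤ 1 := min_le_right _ _
  have hδη : δ ≤ η/3 := min_le_left _ _
  have hU1 : (1:ℝ) ≤ U := le_max_left _ _
  have hU24 : 24/η ≤ U := le_max_right _ _
  have hδU : δ ≤ U := le_trans hδ1 hU1
  -- bound 1: φ(δ) ≥ 1 - η/3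
  have h1 : 1 - η/3 ≤ (1 + δ) * Real.exp (-δ) := by
    have he : 1 - δ ≤ Real.exp (-δ) := by
      have := Real.add_one_le_exp (-δ); linarith
    nlinarith [Real.exp_pos (-δ)]
  -- bound 2: φ(U) ≤ 8/U ≤ η/3
  have h2 : (1 + U) * Real.exp (-U) ≤ η/3 := by
    have hUpos : (0:ℝ) < U := by linarith
    have hkey : U * (1 + U) ≤ 8 * Real.exp U := by
      have hsq : Real.exp U = Real.exp (U/2) * Real.exp (U/2) := by
        rw [← Real.exp_add]; ring_nf
      nlinarith [Real.add_one_le_exp (U/2), Real.exp_pos (U/2)]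
    have h8U : (1 + U) * Real.exp (-U) ≤ 8 / U := by
      have hEpos := Real.exp_pos U
      rw [Real.exp_neg, mul_inv_le_iff₀ hEpos, div_mul_eq_mul_div, le_div_iff₀ hUpos]
      nlinarith
    have : 8 / U ≤ η / 3 := by
      rw [div_le_div_iff₀ (by positivity) (by norm_num)]
      have : 24 ≤ η * U := by
        rw [div_le_iff₀ hη] at hU24
        linarith [hU24]
      linarith
    linarith
  -- bound 3: h ≤ η/3
  have h3 : (U - δ) / N ≤ η/3 := by
    have hNge : (U - δ) * 3 / η ≤ (N : ℝ) := by
      have := Nat.le_ceil ((U - δ) * 3 / η)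
      push_cast [hNdef]
      linarith
    have hNpos : (0:ℝ) < N := by positivity
    rw [div_le_div_iff₀ hNpos (by norm_num)]
    rw [div_le_iff₀ hη] at hNge
    linarith
  linarith

lemma core_lower {Ω : Type*} [MeasureSpace Ω] [IsProbabilityMeasure (ℙ : Measure Ω)]
    {d : ℕ} (ξ : ℕ → Ω → EuclideanSpace ℝ (Fin d)) (hmeas : ∀ i, Measurable (ξ i))
    (hindep : iIndepFun ξ ℙ)
    (hident : ∀ i, Measure.map (ξ i) ℙ = Measure.map (ξ 0) ℙ)
    (α : ℝ) (hα : 0 < α) (b : ℕ → ℝ) (hbpos : ∀ᶠ n in atTop, 0 < b n)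
    (B : Set (Metric.sphere (0 : EuclideanSpace ℝ (Fin d)) 1)) (hBmeas : MeasurableSet B)
    (a cst : ℝ) (ha : 0 ≤ a) (hc : 0 < cst)
    (hRVB : ∀ r : ℝ, 0 < r → Tendsto (fun n : ℕ =>
        (n : ℝ) * (ℙ {ω | ‖ξ 0 ω‖⁻¹ • ξ 0 ω ∈ Subtype.val '' B ∧ ‖ξ 0 ω‖ > r * b n}).toReal)
        atTop (nhds (a * r ^ (-α))))
    (hRVuniv : ∀ r : ℝ, 0 < r → Tendsto (fun n : ℕ =>
        (n : ℝ) * (ℙ {ω | ‖ξ 0 ω‖ > r * b n}).toReal) atTop (nhds (cst * r ^ (-α))))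
    (θ : ℕ → Ω → EuclideanSpace ℝ (Fin d))
    (hθ : ∀ m : ℕ, 1 ≤ m → ∀ ω, ∃ j < m,
      θ m ω = ‖ξ j ω‖⁻¹ • ξ j ω ∧ ∀ k < m, ‖ξ k ω‖ ≤ ‖ξ j ω‖)
    (η : ℝ) (hη : 0 < η) :
    ∃ G : ℕ → Set Ω, (∀ m, MeasurableSet (G m)) ∧
      (∀ᶠ m in atTop, G m ⊆ {ω | θ m ω ∈ Subtype.val '' B}) ∧
      ∃ S, Tendsto (fun m => (ℙ (G m)).toReal) atTop (nhds S) ∧ a / cst * (1 - η) ≤ S := by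
  classical
  obtain ⟨δ, U, N, hδpos, hNpos, hδU, hbound⟩ := choose_params η hη
  set h : ℝ := (U - δ) / N with hhdef
  have hNR : (0:ℝ) < N := by exact_mod_cast hNpos
  have hh : 0 ≤ h := div_nonneg (by linarith) hNR.le
  set u : ℕ → ℝ := fun i => δ + ((N : ℝ) - i) * h with hudef
  have hupos : ∀ i, i ≤ N → 0 < u i := by
    intro i hi
    have : (0:ℝ) ≤ ((N : ℝ) - i) := by
      have : (i:ℝ) ≤ N := by exact_mod_cast hi
      linarith
    have := mul_nonneg this hh
    simp only [hudef]; linarith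
  have humono : ∀ i j : ℕ, i ≤ j → u j ≤ u i := by
    intro i j hij
    have : (i:ℝ) ≤ j := by exact_mod_cast hij
    simp only [hudef]
    nlinarith
  set r : ℕ → ℝ := fun i => (cst / u i) ^ (1/α : ℝ) with hrdef
  have hrpos : ∀ i, i ≤ N → 0 < r i := by
    intro i hi
    exact Real.rpow_pos_of_pos (div_pos hc (hupos i hi)) _
  have hrmono : ∀ i j : ℕ, i ≤ j → j ≤ N → r i ≤ r j := by
    intro i j hij hj
    apply Real.rpow_le_rpow (div_pos hc (hupos i (hij.trans hj))).le
      (div_le_div_of_nonneg_left hc.le (hupos j hj) (humono i j hij))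
    positivity
  have hrval : ∀ i, i ≤ N → r i ^ (-α) = u i / cst := by
    intro i hi
    have hpos : 0 < cst / u i := div_pos hc (hupos i hi)
    show ((cst / u i) ^ (1/α : ℝ)) ^ (-α) = u i / cst
    rw [← Real.rpow_mul hpos.le]
    have hexp : (1/α) * (-α) = -1 := by field_simp
    rw [hexp, Real.rpow_neg_one, inv_div]
  -- basic sets
  set SB : ℝ → Set (EuclideanSpace ℝ (Fin d)) :=
    fun t => {v | ‖v‖⁻¹ • v ∈ Subtype.val '' B ∧ ‖v‖ > t} with hSBdef
  set Bal : ℝ → Set (EuclideanSpace ℝ (Fin d)) := fun t => {v | ‖v‖ ≤ t} with hBaldef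
  have hdirmeas : Measurable (fun v : EuclideanSpace ℝ (Fin d) => ‖v‖⁻¹ • v) :=
    (measurable_norm.inv).smul measurable_id
  have hB'meas : MeasurableSet (Subtype.val '' B) :=
    (MeasurableEmbedding.subtype_coe (Metric.isClosed_sphere.measurableSet)).measurableSet_image.2
      hBmeas
  have hSBmeas : ∀ t, MeasurableSet (SB t) := fun t =>
    (hdirmeas hB'meas).inter (measurableSet_lt measurable_const measurable_norm)
  have hBalmeas : ∀ t, MeasurableSet (Bal t) :=
    fun t => measurableSet_le measurable_norm measurable_const
  -- the events
  set ED : ℕ → ℝ → ℝ → ℕ → Set Ω := fun m t s j =>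
    (ξ j ⁻¹' SB t) ∩ ⋂ k ∈ (Finset.range m).erase j, ξ k ⁻¹' Bal s with hEDdef
  have hEDmeas : ∀ m t s j, MeasurableSet (ED m t s j) := by
    intro m t s j
    exact ((hmeas j) (hSBmeas t)).inter
      (Finset.measurableSet_biInter _ (fun k _ => (hmeas k) (hBalmeas s)))
  have hEDmono : ∀ m t s s' j, s ≤ s' → ED m t s j ⊆ ED m t s' j := by
    intro m t s s' j hss'
    apply Set.inter_subset_inter_right
    apply Set.iInter₂_mono
    intro k _
    apply Set.preimage_mono
    intro v hv
    exact le_trans hv hss'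
  -- same distribution
  have hsame : ∀ k : ℕ, ∀ Sset : Set (EuclideanSpace ℝ (Fin d)), MeasurableSet Sset →
      ℙ (ξ k ⁻¹' Sset) = ℙ (ξ 0 ⁻¹' Sset) := by
    intro k S hS
    rw [← Measure.map_apply (hmeas k) hS, ← Measure.map_apply (hmeas 0) hS, hident k]
  -- product formula
  have hED : ∀ m j, j < m → ∀ t s : ℝ,
      ℙ (ED m t s j) = ℙ (ξ 0 ⁻¹' SB t) * ℙ (ξ 0 ⁻¹' Bal s) ^ (m - 1) := by
    intro m j hj t s
    have hmeasif : ∀ k ∈ Finset.range m, MeasurableSet (if k = j then SB t else Bal s) := by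
      intro k _
      by_cases hkj : k = j
      · rw [if_pos hkj]; exact hSBmeas t
      · rw [if_neg hkj]; exact hBalmeas s
    have hprod := hindep.measure_inter_preimage_eq_mul (Finset.range m)
      (sets := fun k => if k = j then SB t else Bal s) hmeasif
    have hset : (⋂ k ∈ Finset.range m, ξ k ⁻¹' (if k = j then SB t else Bal s)) = ED m t s j := by
      rw [← Finset.insert_erase (Finset.mem_range.2 hj), Finset.set_biInter_insert, if_pos rfl]
      congr 1
      refine Set.iInter₂_congr fun k hk => ?_
      rw [if_neg (Finset.ne_of_mem_erase hk)]
    have hprodR : (∏ k ∈ Finset.range m, ℙ (ξ k ⁻¹' (if k = j then SB t else Bal s)))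
        = ℙ (ξ 0 ⁻¹' SB t) * ℙ (ξ 0 ⁻¹' Bal s) ^ (m - 1) := by
      rw [← Finset.insert_erase (Finset.mem_range.2 hj),
        Finset.prod_insert (Finset.notMem_erase j _), if_pos rfl]
      rw [hsame j _ (hSBmeas t)]
      congr 1
      rw [Finset.prod_congr rfl (fun k hk => by
        rw [if_neg (Finset.ne_of_mem_erase hk), hsame k _ (hBalmeas s)])]
      rw [Finset.prod_const, Finset.card_erase_of_mem (Finset.mem_range.2 hj),
        Finset.card_range]
    rw [← hset, hprod, hprodR]
  -- the disjoint pieces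
  set A : ℕ → ℕ → ℕ → Set Ω := fun m i j =>
    ED m (r (i+1) * b m) (r (i+1) * b m) j \ ED m (r (i+1) * b m) (r i * b m) j with hAdef
  have hAmeas : ∀ m i j, MeasurableSet (A m i j) :=
    fun m i j => (hEDmeas _ _ _ _).diff (hEDmeas _ _ _ _)
  set G : ℕ → Set Ω := fun m =>
    ⋃ p ∈ Finset.range N ×ˢ Finset.range m, A m p.1 p.2 with hGdef
  have hGmeas : ∀ m, MeasurableSet (G m) := by
    intro m
    exact Finset.measurableSet_biUnion _ (fun p _ => hAmeas m p.1 p.2)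
  -- membership facts
  have hAmem : ∀ m i j ω, ω ∈ A m i j →
      (‖ξ j ω‖⁻¹ • ξ j ω ∈ Subtype.val '' B ∧ ‖ξ j ω‖ > r (i+1) * b m)
      ∧ (∀ k, k ∈ (Finset.range m).erase j → ‖ξ k ω‖ ≤ r (i+1) * b m)
      ∧ (∃ k ∈ (Finset.range m).erase j, ¬ (‖ξ k ω‖ ≤ r i * b m)) := by
    intro m i j ω hω
    obtain ⟨⟨h1, h2⟩, h3⟩ := hω
    refine ⟨h1, fun k hk => by
      have := Set.mem_iInter₂.1 h2 k hk
      exact this, ?_⟩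
    have : ω ∉ ⋂ k ∈ (Finset.range m).erase j, ξ k ⁻¹' Bal (r i * b m) := by
      intro hcon
      exact h3 ⟨h1, hcon⟩
    rw [Set.mem_iInter₂] at this
    push_neg at this
    exact this
  -- subset property
  have hGsub : ∀ᶠ m in atTop, G m ⊆ {ω | θ m ω ∈ Subtype.val '' B} := by
    filter_upwards [eventually_ge_atTop 1] with m hm1
    intro ω hω
    simp only [hGdef, Set.mem_iUnion] at hω
    obtain ⟨p, hp, hωA⟩ := hω
    rw [Finset.mem_product, Finset.mem_range, Finset.mem_range] at hp
    obtain ⟨hiN, hjm⟩ := hp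
    obtain ⟨⟨hdir, hnorm⟩, hall, -⟩ := hAmem m p.1 p.2 ω hωA
    obtain ⟨j', hj'm, hθeq, hmax⟩ := hθ m hm1 ω
    have hjj' : j' = p.2 := by
      by_contra hne
      have hj'mem : j' ∈ (Finset.range m).erase p.2 :=
        Finset.mem_erase.2 ⟨hne, Finset.mem_range.2 hj'm⟩
      have h1 := hall j' hj'mem
      have h2 := hmax p.2 hjm
      linarith
    simp only [Set.mem_setOf_eq]
    rw [hθeq, hjj']
    exact hdir
  -- disjointness (for b m ≥ 0)
  have hAdisj : ∀ m : ℕ, 0 ≤ b m →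
      (↑(Finset.range N ×ˢ Finset.range m) : Set (ℕ × ℕ)).PairwiseDisjoint
        (fun p => A m p.1 p.2) := by
    intro m hbm p hp q hq hpq
    simp only [Finset.coe_product, Set.mem_prod, Finset.mem_coe, Finset.mem_range] at hp hq
    have htmono : ∀ i j : ℕ, i ≤ j → j ≤ N → r i * b m ≤ r j * b m :=
      fun i j hij hj => mul_le_mul_of_nonneg_right (hrmono i j hij hj) hbm
    have key : ∀ i i' j : ℕ, i < i' → i' < N → Disjoint (A m i j) (A m i' j) := by
      intro i i' j hii' hi'N
      rw [Set.disjoint_left]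
      intro ω hω1 hω2
      obtain ⟨-, hall, -⟩ := hAmem m i j ω hω1
      obtain ⟨-, -, ⟨k, hk, hknot⟩⟩ := hAmem m i' j ω hω2
      have h1 := hall k hk
      have h2 : r (i+1) * b m ≤ r i' * b m := htmono (i+1) i' hii' hi'N.le
      exact hknot (le_trans h1 h2)
    show Disjoint (A m p.1 p.2) (A m q.1 q.2)
    rcases eq_or_ne p.2 q.2 with hj | hj
    · -- same j, different i
      have hij : p.1 ≠ q.1 := by
        intro hi
        exact hpq (Prod.ext hi hj)
      rw [← hj]
      rcases lt_or_gt_of_ne hij with hlt | hgt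
      · exact key p.1 q.1 p.2 hlt hq.1
      · exact (key q.1 p.1 p.2 hgt hp.1).symm
    · -- different j
      rw [Set.disjoint_left]
      intro ω hω1 hω2
      obtain ⟨⟨-, hn1⟩, hall1, -⟩ := hAmem m p.1 p.2 ω hω1
      obtain ⟨⟨-, hn2⟩, hall2, -⟩ := hAmem m q.1 q.2 ω hω2
      have hq2mem : q.2 ∈ (Finset.range m).erase p.2 :=
        Finset.mem_erase.2 ⟨(Ne.symm hj), Finset.mem_range.2 hq.2⟩
      have hp2mem : p.2 ∈ (Finset.range m).erase q.2 :=
        Finset.mem_erase.2 ⟨hj, Finset.mem_range.2 hp.2⟩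
      have h1 := hall1 q.2 hq2mem
      have h2 := hall2 p.2 hp2mem
      linarith
  -- measure of G
  set T : ℕ → ℝ := fun m => ∑ i ∈ Finset.range N,
      ((m : ℝ) * (ℙ (ξ 0 ⁻¹' SB (r (i+1) * b m))).toReal) *
        ((ℙ (ξ 0 ⁻¹' Bal (r (i+1) * b m))).toReal ^ (m-1)
          - (ℙ (ξ 0 ⁻¹' Bal (r i * b m))).toReal ^ (m-1)) with hTdef
  have hGT : ∀ᶠ m in atTop, (ℙ (G m)).toReal = T m := by
    filter_upwards [hbpos] with m hbm
    have hG : ℙ (G m) = ∑ p ∈ Finset.range N ×ˢ Finset.range m, ℙ (A m p.1 p.2) := by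
      simp only [hGdef]
      exact measure_biUnion_finset (hAdisj m hbm.le) (fun p _ => hAmeas m p.1 p.2)
    have hA : ∀ p ∈ Finset.range N ×ˢ Finset.range m,
        (ℙ (A m p.1 p.2)).toReal =
          (ℙ (ξ 0 ⁻¹' SB (r (p.1+1) * b m))).toReal *
            ((ℙ (ξ 0 ⁻¹' Bal (r (p.1+1) * b m))).toReal ^ (m-1)
              - (ℙ (ξ 0 ⁻¹' Bal (r p.1 * b m))).toReal ^ (m-1)) := by
      intro p hp
      rw [Finset.mem_product, Finset.mem_range, Finset.mem_range] at hp
      have hsub : ED m (r (p.1+1) * b m) (r p.1 * b m) p.2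
          ⊆ ED m (r (p.1+1) * b m) (r (p.1+1) * b m) p.2 :=
        hEDmono _ _ _ _ _ (mul_le_mul_of_nonneg_right (hrmono p.1 (p.1+1) (Nat.le_succ _) hp.1)
          hbm.le)
      have hdiff : ℙ (A m p.1 p.2) = ℙ (ED m (r (p.1+1) * b m) (r (p.1+1) * b m) p.2)
          - ℙ (ED m (r (p.1+1) * b m) (r p.1 * b m) p.2) := by
        simp only [hAdef]
        exact measure_diff hsub (hEDmeas _ _ _ _).nullMeasurableSet (measure_ne_top ℙ _)
      rw [hdiff, hED m p.2 hp.2, hED m p.2 hp.2]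
      have hle : ℙ (ξ 0 ⁻¹' SB (r (p.1+1) * b m)) * ℙ (ξ 0 ⁻¹' Bal (r p.1 * b m)) ^ (m-1)
          ≤ ℙ (ξ 0 ⁻¹' SB (r (p.1+1) * b m)) * ℙ (ξ 0 ⁻¹' Bal (r (p.1+1) * b m)) ^ (m-1) := by
        apply mul_le_mul_right
        apply pow_le_pow_left'
        apply measure_mono
        apply Set.preimage_mono
        intro v hv
        exact le_trans hv (mul_le_mul_of_nonneg_right
          (hrmono p.1 (p.1+1) (Nat.le_succ _) hp.1) hbm.le)
      rw [ENNReal.toReal_sub_of_le hle (ENNReal.mul_ne_top (measure_ne_top ℙ _) (ENNReal.pow_ne_top (measure_ne_top ℙ _)))]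
      rw [ENNReal.toReal_mul, ENNReal.toReal_mul, ENNReal.toReal_pow, ENNReal.toReal_pow]
      ring
    rw [hG, ENNReal.toReal_sum (fun p _ => measure_ne_top ℙ _)]
    rw [Finset.sum_congr rfl hA, Finset.sum_product]
    simp only [hTdef]
    apply Finset.sum_congr rfl
    intro i hi
    rw [Finset.sum_const, Finset.card_range, nsmul_eq_mul]
    ring
  -- limits
  have hpreSB : ∀ t : ℝ, (ξ 0 ⁻¹' SB t)
      = {ω | ‖ξ 0 ω‖⁻¹ • ξ 0 ω ∈ Subtype.val '' B ∧ ‖ξ 0 ω‖ > t} := fun t => rfl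
  have hFpow : ∀ i : ℕ, i ≤ N →
      Tendsto (fun m : ℕ => (ℙ (ξ 0 ⁻¹' Bal (r i * b m))).toReal ^ (m-1)) atTop
        (nhds (Real.exp (-(u i)))) := by
    intro i hi
    have hLa : Tendsto (fun m : ℕ => (m : ℝ) * (ℙ {ω | ‖ξ 0 ω‖ > r i * b m}).toReal)
        atTop (nhds (u i)) := by
      have h1 := hRVuniv (r i) (hrpos i hi)
      rw [hrval i hi] at h1
      have h2 : cst * (u i / cst) = u i := by field_simp
      rwa [h2] at h1
    have h01 : ∀ m : ℕ, 0 ≤ (ℙ {ω | ‖ξ 0 ω‖ > r i * b m}).toReal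
        ∧ (ℙ {ω | ‖ξ 0 ω‖ > r i * b m}).toReal ≤ 1 := by
      intro m
      constructor
      · exact ENNReal.toReal_nonneg
      · have := prob_le_one (μ := ℙ) (s := {ω | ‖ξ 0 ω‖ > r i * b m})
        simpa using ENNReal.toReal_mono ENNReal.one_ne_top this
    have := pow_one_sub_tendsto_exp _ _ h01 hLa
    apply this.congr
    intro m
    congr 1
    have hcompl : {ω | ‖ξ 0 ω‖ > r i * b m} = (ξ 0 ⁻¹' Bal (r i * b m))ᶜ := by
      ext ω
      simp only [hBaldef, Set.mem_setOf_eq, Set.mem_compl_iff, Set.mem_preimage, not_le]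
    have hmb : MeasurableSet (ξ 0 ⁻¹' Bal (r i * b m)) := (hmeas 0) (hBalmeas _)
    rw [hcompl, prob_compl_eq_one_sub hmb,
      ENNReal.toReal_sub_of_le prob_le_one ENNReal.one_ne_top]
    simp
  set S : ℝ := ∑ i ∈ Finset.range N,
      (a * r (i+1) ^ (-α)) * (Real.exp (-(u (i+1))) - Real.exp (-(u i))) with hSdef
  have hTS : Tendsto T atTop (nhds S) := by
    rw [hTdef, hSdef]
    apply tendsto_finset_sum
    intro i hi
    rw [Finset.mem_range] at hi
    apply Tendsto.mul
    · have := hRVB (r (i+1)) (hrpos (i+1) hi)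
      simpa only [hpreSB] using this
    · exact (hFpow (i+1) hi).sub (hFpow i (le_of_lt (Nat.lt_of_lt_of_le hi (le_refl N))))
  have hGS : Tendsto (fun m => (ℙ (G m)).toReal) atTop (nhds S) :=
    hTS.congr' (by filter_upwards [hGT] with m hm using hm.symm)
  -- lower bound on S
  have hSlow : a / cst * (1 - η) ≤ S := by
    have hSeq : S = (a / cst) * ∑ i ∈ Finset.range N,
        (δ + ((N : ℝ) - (i+1)) * h) *
          (Real.exp (-(δ + ((N : ℝ) - (i+1)) * h)) - Real.exp (-(δ + ((N : ℝ) - i) * h))) := by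
      rw [hSdef, Finset.mul_sum]
      apply Finset.sum_congr rfl
      intro i hi
      rw [Finset.mem_range] at hi
      rw [hrval (i+1) hi]
      have hu1 : u (i+1) = δ + ((N : ℝ) - (i+1)) * h := by
        simp only [hudef]; push_cast; ring
      have hu2 : u i = δ + ((N : ℝ) - i) * h := by simp only [hudef]
      rw [hu1, hu2]
      ring
    have hsum := sum_lower δ h hδpos hh N
    have hU : δ + N * h = U := by
      rw [hhdef]
      field_simp; ring
    rw [hU] at hsum
    have hfinal : 1 - η ≤ ∑ i ∈ Finset.range N,
        (δ + ((N : ℝ) - (i+1)) * h) *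
          (Real.exp (-(δ + ((N : ℝ) - (i+1)) * h)) - Real.exp (-(δ + ((N : ℝ) - i) * h))) := by
      linarith
    rw [hSeq]
    exact mul_le_mul_of_nonneg_left hfinal (div_nonneg ha hc.le)
  exact ⟨G, hGmeas, hGsub, S, hGS, hSlow⟩

/-- The direction `θₘ` of the maximal-norm vector among `m` i.i.d. copies of a regularly
varying vector converges in distribution to the normalized spectral measure: for every
`σ`-continuity set `B` of the unit sphere, `P(θₘ ∈ B) → σ(B)/σ(S)`. -/
theorem max_direction_converges_to_spectral_measure
    {Ω : Type*} [MeasureSpace Ω] [IsProbabilityMeasure (ℙ : Measure Ω)]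
    (d : ℕ) (ξ : ℕ → Ω → EuclideanSpace ℝ (Fin d)) (hmeas : ∀ i, Measurable (ξ i))
    (hindep : iIndepFun ξ ℙ)
    (hident : ∀ i, Measure.map (ξ i) ℙ = Measure.map (ξ 0) ℙ)
    (α : ℝ) (hα : 0 < α)
    (σ : Measure (Metric.sphere (0 : EuclideanSpace ℝ (Fin d)) 1))
    [IsFiniteMeasure σ] (hσpos : σ Set.univ ≠ 0)
    (Lt : ℝ → ℝ) (hLt : ∀ l : ℝ, 0 < l →
      Tendsto (fun x => Lt (l * x) / Lt x) atTop (nhds 1))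
    (b : ℕ → ℝ) (hb : ∀ n : ℕ, b n = (n : ℝ) ^ (1 / α) * Lt n)
    (hRV : ∀ r : ℝ, 0 < r →
      ∀ B : Set (Metric.sphere (0 : EuclideanSpace ℝ (Fin d)) 1),
        MeasurableSet B → σ (frontier B) = 0 →
        Tendsto (fun n : ℕ =>
            (n : ℝ) * (ℙ {ω | ‖ξ 0 ω‖⁻¹ • ξ 0 ω ∈ Subtype.val '' B ∧
              ‖ξ 0 ω‖ > r * b n}).toReal)
          atTop (nhds ((σ B).toReal * r ^ (-α))))
    -- `θ m` is the direction of the maximal-norm vector among `ξ 0, …, ξ (m-1)`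
    (θ : ℕ → Ω → EuclideanSpace ℝ (Fin d))
    (hθ : ∀ m : ℕ, 1 ≤ m → ∀ ω, ∃ j < m,
      θ m ω = ‖ξ j ω‖⁻¹ • ξ j ω ∧ ∀ k < m, ‖ξ k ω‖ ≤ ‖ξ j ω‖) :
    ∀ B : Set (Metric.sphere (0 : EuclideanSpace ℝ (Fin d)) 1),
      MeasurableSet B → σ (frontier B) = 0 →
      Tendsto (fun m : ℕ => (ℙ {ω | θ m ω ∈ Subtype.val '' B}).toReal)
        atTop (nhds ((σ B).toReal / (σ Set.univ).toReal)) := by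
  intro B hBmeas hBfront
  have hfruniv : σ (frontier (Set.univ : Set (Metric.sphere (0 : EuclideanSpace ℝ (Fin d)) 1)))
      = 0 := by rw [frontier_univ]; exact measure_empty
  set c : ℝ := (σ Set.univ).toReal with hcdef
  have hcpos : 0 < c := ENNReal.toReal_pos hσpos (measure_ne_top σ _)
  -- b is eventually positive
  have hbpos : ∀ᶠ n in atTop, 0 < b n := by
    by_contra hcon
    rw [Filter.not_eventually] at hcon
    have hfreq : ∃ᶠ n in atTop, b n ≤ 0 := by
      apply hcon.mono
      intro n hn
      exact not_lt.1 hn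
    have h1 := hRV 1 one_pos Set.univ MeasurableSet.univ hfruniv
    have h2 := hRV 2 two_pos Set.univ MeasurableSet.univ hfruniv
    rw [Real.one_rpow, mul_one] at h1
    have hlt : c * (2:ℝ) ^ (-α) < c := by
      have : (2:ℝ) ^ (-α) < 1 := Real.rpow_lt_one_of_one_lt_of_neg one_lt_two (by linarith)
      nlinarith
    have hev := (h1.sub h2).eventually (eventually_gt_nhds (by linarith : (0:ℝ) < c - c * 2 ^ (-α)))
    obtain ⟨n, hbn, hgt⟩ := (hfreq.and_eventually hev).exists
    have hsub : {ω | ‖ξ 0 ω‖⁻¹ • ξ 0 ω ∈ Subtype.val '' (Set.univ : Set (Metric.sphere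
          (0 : EuclideanSpace ℝ (Fin d)) 1)) ∧ ‖ξ 0 ω‖ > 1 * b n}
        ⊆ {ω | ‖ξ 0 ω‖⁻¹ • ξ 0 ω ∈ Subtype.val '' (Set.univ : Set (Metric.sphere
          (0 : EuclideanSpace ℝ (Fin d)) 1)) ∧ ‖ξ 0 ω‖ > 2 * b n} := by
      intro ω hω
      exact ⟨hω.1, by nlinarith [hω.2]⟩
    have hle : (n : ℝ) * (ℙ {ω | ‖ξ 0 ω‖⁻¹ • ξ 0 ω ∈ Subtype.val '' (Set.univ : Set
          (Metric.sphere (0 : EuclideanSpace ℝ (Fin d)) 1)) ∧ ‖ξ 0 ω‖ > 1 * b n}).toReal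
        ≤ (n : ℝ) * (ℙ {ω | ‖ξ 0 ω‖⁻¹ • ξ 0 ω ∈ Subtype.val '' (Set.univ : Set
          (Metric.sphere (0 : EuclideanSpace ℝ (Fin d)) 1)) ∧ ‖ξ 0 ω‖ > 2 * b n}).toReal := by
      apply mul_le_mul_of_nonneg_left _ (Nat.cast_nonneg n)
      exact ENNReal.toReal_mono (measure_ne_top ℙ _) (measure_mono hsub)
    linarith
  -- directions of nonzero vectors lie on the sphere
  have hdirm : ∀ v : EuclideanSpace ℝ (Fin d), v ≠ 0 →
      ‖v‖⁻¹ • v ∈ Subtype.val '' (Set.univ : Set (Metric.sphere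
        (0 : EuclideanSpace ℝ (Fin d)) 1)) := by
    intro v hv
    have hn : ‖v‖ ≠ 0 := norm_ne_zero_iff.2 hv
    have hnorm : ‖(‖v‖⁻¹ • v)‖ = 1 := by
      rw [norm_smul, norm_inv, norm_norm, inv_mul_cancel₀ hn]
    rw [Set.image_univ, Subtype.range_coe]
    exact mem_sphere_zero_iff_norm.2 hnorm
  -- plain-norm regular variation
  have hRVuniv : ∀ r : ℝ, 0 < r → Tendsto (fun n : ℕ =>
      (n : ℝ) * (ℙ {ω | ‖ξ 0 ω‖ > r * b n}).toReal) atTop (nhds (c * r ^ (-α))) := by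
    intro r hr
    have h0 := hRV r hr Set.univ MeasurableSet.univ hfruniv
    apply h0.congr'
    filter_upwards [hbpos] with n hbn
    have hseteq : {ω | ‖ξ 0 ω‖⁻¹ • ξ 0 ω ∈ Subtype.val '' (Set.univ : Set (Metric.sphere
          (0 : EuclideanSpace ℝ (Fin d)) 1)) ∧ ‖ξ 0 ω‖ > r * b n}
        = {ω | ‖ξ 0 ω‖ > r * b n} := by
      ext ω
      simp only [Set.mem_setOf_eq]
      constructor
      · rintro ⟨-, hgt⟩; exact hgt
      · intro hgt
        refine ⟨?_, hgt⟩
        apply hdirm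
        intro h0'
        rw [h0', norm_zero] at hgt
        nlinarith
    rw [hseteq]
  -- apply the core lemma
  set l : ℝ := (σ B).toReal / c with hldef
  have haB : (0:ℝ) ≤ (σ B).toReal := ENNReal.toReal_nonneg
  have haBc : (σ B).toReal ≤ c :=
    ENNReal.toReal_mono (measure_ne_top σ _) (measure_mono (Set.subset_univ B))
  have hl0 : 0 ≤ l := div_nonneg haB hcpos.le
  have hl1 : l ≤ 1 := by
    rw [hldef, div_le_one hcpos]; exact haBc
  have hcompl : (σ Bᶜ).toReal = c - (σ B).toReal := by
    rw [measure_compl hBmeas (measure_ne_top σ _),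
      ENNReal.toReal_sub_of_le (measure_mono (Set.subset_univ B)) (measure_ne_top σ _)]
  rw [Metric.tendsto_atTop]
  intro ε hε
  set η : ℝ := ε / 2 with hηdef
  have hη : 0 < η := by positivity
  obtain ⟨G, hGmeas, hGsub, S, hGS, hSlow⟩ :=
    core_lower ξ hmeas hindep hident α hα b hbpos B hBmeas (σ B).toReal c haB hcpos
      (fun r hr => hRV r hr B hBmeas hBfront) hRVuniv θ hθ η hη
  obtain ⟨G', hG'meas, hG'sub, S', hG'S, hS'low⟩ :=
    core_lower ξ hmeas hindep hident α hα b hbpos Bᶜ hBmeas.compl (σ Bᶜ).toReal c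
      ENNReal.toReal_nonneg hcpos
      (fun r hr => hRV r hr Bᶜ hBmeas.compl (by rwa [frontier_compl])) hRVuniv θ hθ η hη
  have hev1 : ∀ᶠ m in atTop, (ℙ (G m)).toReal > S - ε / 4 :=
    hGS.eventually (eventually_gt_nhds (by linarith))
  have hev2 : ∀ᶠ m in atTop, (ℙ (G' m)).toReal > S' - ε / 4 :=
    hG'S.eventually (eventually_gt_nhds (by linarith))
  have hfinal : ∀ᶠ m in atTop, dist (ℙ {ω | θ m ω ∈ Subtype.val '' B}).toReal l < ε := by
    filter_upwards [hev1, hev2, hGsub, hG'sub] with m h1 h2 h3 h4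
    set f : ℝ := (ℙ {ω | θ m ω ∈ Subtype.val '' B}).toReal with hfdef
    have hflow : (ℙ (G m)).toReal ≤ f :=
      ENNReal.toReal_mono (measure_ne_top ℙ _) (measure_mono h3)
    have hfup : f ≤ 1 - (ℙ (G' m)).toReal := by
      have hdisj : {ω | θ m ω ∈ Subtype.val '' B} ⊆ (G' m)ᶜ := by
        intro ω hω hω'
        have hmem := h4 hω'
        simp only [Set.mem_setOf_eq] at hω hmem
        obtain ⟨x, hx, hxe⟩ := hω
        obtain ⟨y, hy, hye⟩ := hmem
        rw [← hye] at hxe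
        exact hy (Subtype.coe_injective hxe ▸ hx)
      have hmono := ENNReal.toReal_mono (measure_ne_top ℙ _) (measure_mono hdisj)
      have h1t : (ℙ ((G' m)ᶜ)).toReal = 1 - (ℙ (G' m)).toReal := by
        rw [prob_compl_eq_one_sub (hG'meas m),
          ENNReal.toReal_sub_of_le prob_le_one ENNReal.one_ne_top]
        simp
      rw [h1t] at hmono
      exact hmono
    have hS1 : S ≥ l * (1 - η) := by rw [hldef]; exact hSlow
    have hS'1 : S' ≥ (1 - l) * (1 - η) := by
      have : (σ Bᶜ).toReal / c = 1 - l := by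
        rw [hcompl, hldef]
        field_simp
      rw [this] at hS'low
      exact hS'low
    rw [Real.dist_eq, abs_sub_lt_iff]
    constructor
    · -- f - l < ε
      have : f ≤ 1 - S' + ε / 4 := by linarith
      nlinarith
    · -- l - f < ε
      have : f > S - ε / 4 := by linarith
      nlinarith
  rw [Filter.eventually_atTop] at hfinal
  obtain ⟨M, hM⟩ := hfinal
  exact ⟨M, hM⟩
end
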